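/- arXiv:2406.00223 — 2 statements merged into one kernel-verified Lean document; each statement's English description precedes it below -/
import Mathlib

section
/- Let B be a bicategory with objects x₀₀₀, x₀₀₁, x₀₀₂, x₀₁₀, x₀₁₁, x₀₁₂, x₁₀₀, x₁₀₁, x₁₀₂, x₁₁₀, x₁₁₁, x₁₁₂, 1-morphisms m₀₀₁ : x₀₀₀ ⟶ x₀₀₁, m₀₀₂ : x₀₀₁ ⟶ x₀₀₂, a₀₀₀ : x₀₀₀ ⟶ x₀₁₀, a₀₀₁ : x₀₀₁ ⟶ x₀₁₁, m₀₁₁ : x₀₁₀ ⟶ x₀₁₁, m₀₁₂ : x₀₁₁ ⟶ x₀₁₂, b₀₁₂ : x₀₁₂ ⟶ x₁₁₂, b₀₀₂ : x₀₀₂ ⟶ x₁₀₂, n₁₀₂ : x₁₀₂ ⟶ x₁₀₁, n₁₀₁ : x₁₀₁ ⟶ x₁₀₀, a₁₀₀ : x₁₀₀ ⟶ x₁₁₀, a₁₀₁ : x₁₀₁ ⟶ x₁₁₁, m₁₁₁ : x₁₁₀ ⟶ x₁₁₁, m₁₁₂ : x₁₁₁ ⟶ x₁₁₂, and 2-morphisms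 T₁ : a₀₀₀ ≫ m₀₁₁ ⟶ m₀₀₁ ≫ a₀₀₁ and B₁ : a₁₀₁ ⟶ n₁₀₁ ≫ a₁₀₀ ≫ m₁₁₁. Set f₁₂ = a₀₀₁ ≫ m₀₁₂ ≫ b₀₁₂, g₁₂ = m₀₀₂ ≫ b₀₀₂ ≫ n₁₀₂ ≫ a₁₀₁ ≫ m₁₁₂, f₀₂ = a₀₀₀ ≫ m₀₁₁ ≫ m₀₁₂ ≫ b₀₁₂ and g₀₂ = m₀₀₁ ≫ m₀₀₂ ≫ b₀₀₂ ≫ n₁₀₂ ≫ n₁₀₁ ≫ a₁₀₀ ≫ m₁₁₁ ≫ m₁₁₂ (composites taken with any fixed bracketing; all maps below are understood up to the canonical associator and unitor isomorphisms). Assume: (i) there is an adjunction m₀₀₁ ⊣ m₀₀₁ᴿ with counit ε : m₀₀₁ᴿ ≫ m₀₀₁ ⟶ 𝟙_{x₀₀₁}; (ii) the mate of T₁, namely the composite m₀₀₁ᴿ ≫ (a₀₀₀ ≫ m₀₁₁) ⟶ m₀₀₁ᴿ ≫ (m₀₀₁ ≫ a₀₀₁) ≅ (m₀₀₁ᴿ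 ≫ m₀₀₁) ≫ a₀₀₁ ⟶ 𝟙 ≫ a₀₀₁ ≅ a₀₀₁ obtained by whiskering T₁ with m₀₀₁ᴿ and applying ε, is an invertible 2-morphism; (iii) B₁ is invertible. Then the map Hom_{B(x₀₀₁,x₁₁₂)}(f₁₂, g₁₂) → Hom_{B(x₀₀₀,x₁₁₂)}(f₀₂, g₀₂), sending α to the composite f₀₂ ⟶ m₀₀₁ ≫ f₁₂ (whiskering T₁ with m₀₁₂ ≫ b₀₁₂ on the right) followed by m₀₀₁ ≫ f₁₂ ⟶ m₀₀₁ ≫ g₁₂ (whiskering α with m₀₀₁ on the left) followed by m₀₀₁ ≫ g₁₂ ⟶ g₀₂ (whiskering B₁ into the a₁₀₁ factor), is a bijection. -/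
/-!
Under the adjunction `m₀₀₁ ⊣ m₀₀₁ᴿ`, 2-morphisms `f₀₂ ⟶ m₀₀₁ ≫ h` correspond to 2-morphisms
`m₀₀₁ᴿ ≫ f₀₂ ⟶ h`, and this correspondence turns `α ↦ γ ≫ m₀₀₁ ◁ α` into postcomposition
with the transpose of `γ`. For `γ` the whiskered `T₁` that transpose is the whiskered mate
of `T₁`, an isomorphism, so `α ↦ γ ≫ m₀₀₁ ◁ α` is bijective; composing with the invertible
whiskered `B₁` keeps it so.
-/

open CategoryTheory CategoryTheory.Bicategory

namespace CategoryTheory.Bicategory.Adjunction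

variable {B : Type*} [Bicategory B] {a b c d : B} {l : b ⟶ c} {r : c ⟶ b} (adj : l ⊣ r)

lemma homEquiv₁_naturality_left {g g' : b ⟶ d} {h : c ⟶ d} (f : g' ⟶ g) (γ : g ⟶ l ≫ h) :
    adj.homEquiv₁ (f ≫ γ) = r ◁ f ≫ adj.homEquiv₁ γ := by
  simp only [homEquiv₁_apply, whiskerLeft_comp, Category.assoc]

lemma homEquiv₁_naturality_right {g : b ⟶ d} {h h' : c ⟶ d} (γ : g ⟶ l ≫ h) (β : h ⟶ h') :
    adj.homEquiv₁ (γ ≫ l ◁ β) = adj.homEquiv₁ γ ≫ β := by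
  simp only [homEquiv₁_apply]
  calc r ◁ (γ ≫ l ◁ β) ≫ (α_ r l h').inv ≫ adj.counit ▷ h' ≫ (λ_ h').hom
      = 𝟙 _ ⊗≫ r ◁ γ ⊗≫ ((r ≫ l) ◁ β ≫ adj.counit ▷ h') ⊗≫ 𝟙 _ := by bicategory
    _ = 𝟙 _ ⊗≫ r ◁ γ ⊗≫ (adj.counit ▷ h ≫ 𝟙 _ ◁ β) ⊗≫ 𝟙 _ := by rw [whisker_exchange]
    _ = (r ◁ γ ≫ (α_ r l h).inv ≫ adj.counit ▷ h ≫ (λ_ h).hom) ≫ β := by bicategory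

lemma homEquiv₁_whiskerRight_comp_associator {g : b ⟶ d} {h : c ⟶ d} (γ : g ⟶ l ≫ h)
    (k : d ⟶ a) :
    adj.homEquiv₁ (γ ▷ k ≫ (α_ l h k).hom) = (α_ r g k).inv ≫ adj.homEquiv₁ γ ▷ k := by
  simp only [homEquiv₁_apply]
  bicategory

lemma bijective_comp_whiskerLeft_of_isIso_homEquiv₁ {g : b ⟶ d} {h h' : c ⟶ d}
    (γ : g ⟶ l ≫ h) [IsIso (adj.homEquiv₁ γ)] :
    Function.Bijective fun β : h ⟶ h' => γ ≫ l ◁ β := by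
  have hcomp : (fun β : h ⟶ h' => γ ≫ l ◁ β) =
      adj.homEquiv₁.symm ∘ fun β => adj.homEquiv₁ γ ≫ β := by
    funext β
    rw [Function.comp_apply, Equiv.eq_symm_apply, homEquiv₁_naturality_right]
  rw [hcomp]
  exact adj.homEquiv₁.symm.bijective.comp
    ⟨fun _ _ hβ => (cancel_epi _).1 hβ, fun β => ⟨inv (adj.homEquiv₁ γ) ≫ β, by simp⟩⟩

end CategoryTheory.Bicategory.Adjunction

/-- (Lemma on composition with `T₁` and `B₁` being an equivalence,
formulated in a bicategory.)  Given the displayed 1- and 2-morphisms, assuming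
`m₀₀₁` admits a right adjoint `m₀₀₁ᴿ`, the mate of `T₁` is invertible, and `B₁`
is invertible, the map `Hom(f₁₂, g₁₂) → Hom(f₀₂, g₀₂)` given by
`α ↦ B₁ ∘ (m₀₀₁ ◁ α) ∘ T₁` (inserted via whiskerings and the canonical
associators) is a bijection. -/
theorem map_monoidales_stmt1 {B : Type*} [Bicategory B]
    {x000 x001 x002 x010 x011 x012 x100 x101 x102 x110 x111 x112 : B}
    (m001 : x000 ⟶ x001) (m002 : x001 ⟶ x002)
    (a000 : x000 ⟶ x010) (a001 : x001 ⟶ x011)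
    (m011 : x010 ⟶ x011) (m012 : x011 ⟶ x012)
    (b012 : x012 ⟶ x112) (b002 : x002 ⟶ x102)
    (n102 : x102 ⟶ x101) (n101 : x101 ⟶ x100)
    (a100 : x100 ⟶ x110) (a101 : x101 ⟶ x111)
    (m111 : x110 ⟶ x111) (m112 : x111 ⟶ x112)
    (T1 : a000 ≫ m011 ⟶ m001 ≫ a001)
    (B1 : a101 ⟶ n101 ≫ a100 ≫ m111)
    (m001R : x001 ⟶ x000) (adj : Bicategory.Adjunction m001 m001R)
    -- (ii) the mate of `T₁` is invertible:
    (hT1 : IsIso (m001R ◁ T1 ≫ (α_ m001R m001 a001).inv ≫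
      adj.counit ▷ a001 ≫ (λ_ a001).hom))
    -- (iii) `B₁` is invertible:
    (hB1 : IsIso B1) :
    Function.Bijective
      (fun α : (a001 ≫ m012 ≫ b012 ⟶ m002 ≫ b002 ≫ n102 ≫ a101 ≫ m112) =>
        ((α_ a000 m011 (m012 ≫ b012)).inv ≫
          T1 ▷ (m012 ≫ b012) ≫
          (α_ m001 a001 (m012 ≫ b012)).hom ≫
          m001 ◁ α ≫
          m001 ◁ (m002 ◁ (b002 ◁ (n102 ◁ (B1 ▷ m112)))) ≫
          m001 ◁ (m002 ◁ (b002 ◁ (n102 ◁ ((α_ n101 (a100 ≫ m111) m112).hom ≫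
            n101 ◁ (α_ a100 m111 m112).hom)))) :
        (a000 ≫ m011 ≫ m012 ≫ b012 ⟶
          m001 ≫ m002 ≫ b002 ≫ n102 ≫ n101 ≫ a100 ≫ m111 ≫ m112))) := by
  set γ := (α_ a000 m011 (m012 ≫ b012)).inv ≫ T1 ▷ (m012 ≫ b012) ≫
    (α_ m001 a001 (m012 ≫ b012)).hom
  set e := m002 ◁ b002 ◁ n102 ◁ (B1 ▷ m112 ≫ (α_ n101 (a100 ≫ m111) m112).hom ≫
    n101 ◁ (α_ a100 m111 m112).hom)
  have : IsIso (adj.homEquiv₁ T1) := hT1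
  have : IsIso (adj.homEquiv₁ γ) := by
    rw [adj.homEquiv₁_naturality_left, adj.homEquiv₁_whiskerRight_comp_associator]
    infer_instance
  have hcomp_e : Function.Bijective fun α : a001 ≫ m012 ≫ b012 ⟶ _ => α ≫ e :=
    ⟨fun _ _ hα => (cancel_mono e).1 hα, fun β => ⟨β ≫ inv e, by simp⟩⟩
  convert (adj.bijective_comp_whiskerLeft_of_isIso_homEquiv₁ γ).comp hcomp_e using 1
  funext α
  simp only [γ, e, Function.comp_apply, whiskerLeft_comp, Category.assoc]
end

section
/- Let r ≥ 3, let Δʳ_† = (Δʳ, T) be a scaled simplicial set, and let M be a nonempty subset of {0,1,…,r−1} with largest element t. Assume: (i) there exists an integer s with 0 ≤ s < t such that s ∉ M and i ∈ M for all s < i ≤ t; (ii) |M| ≤ r−2, and if |M| = r−2 then the triangle Δ^{[r]∖M} is not thin in Δʳ_†; (iii) the triangles Δ^{\{i,t,t+1\}} are thin in Δʳ_† for all s ≤ i < t. Then the inclusion of the generalized horn Λʳ_M, equipped with the scaling induced from Δʳ_†, into Δʳ_† is a scaled anodyne map. -/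
open CategoryTheory
namespace ScaledSSet
section
open Simplicial

def stdSimplex (n : ℕ) : SSet.{0} where
  obj m := Fin (m.unop.len + 1) →o Fin (n + 1)
  map φ := TypeCat.ofHom (fun f => f.comp φ.unop.toOrderHom)
  map_id m := by ext f x; rfl
  map_comp φ ψ := by ext f x; rfl

instance stdFunLike (n : ℕ) (m : SimplexCategoryᵒᵖ) :
    FunLike ((stdSimplex n).obj m) (Fin (m.unop.len + 1)) (Fin (n + 1)) :=
  inferInstanceAs (FunLike (Fin (m.unop.len + 1) →o Fin (n + 1)) _ _)

@[simp] lemma stdSimplex_mk_apply {n : ℕ} {m : SimplexCategoryᵒᵖ}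
    (f : Fin (m.unop.len + 1) → Fin (n + 1)) (hf : Monotone f) (x : Fin (m.unop.len + 1)) :
    (⟨f, hf⟩ : (stdSimplex n).obj m) x = f x := rfl

@[simp] lemma stdSimplex_map_apply {n : ℕ} {m m' : SimplexCategoryᵒᵖ} (φ : m ⟶ m')
    (f : (stdSimplex n).obj m) (x : Fin (m'.unop.len + 1)) :
    ((stdSimplex n).map φ f) x = f (φ.unop.toOrderHom x) := rfl

def subOf (X : SSet.{0}) (P : ∀ m : SimplexCategoryᵒᵖ, Set (X.obj m))
    (hP : ∀ {m m' : SimplexCategoryᵒᵖ} (φ : m ⟶ m') {σ : X.obj m},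
      σ ∈ P m → X.map φ σ ∈ P m') : SSet.{0} where
  obj m := P m
  map φ := TypeCat.ofHom (fun σ => ⟨X.map φ σ.1, hP φ σ.2⟩)
  map_id _ := by ext σ; exact X.map_id_apply _ σ.1
  map_comp φ ψ := by ext σ; exact X.map_comp_apply φ ψ σ.1

def subIncl (X : SSet.{0}) (P : ∀ m : SimplexCategoryᵒᵖ, Set (X.obj m))
    (hP : ∀ {m m' : SimplexCategoryᵒᵖ} (φ : m ⟶ m') {σ : X.obj m},
      σ ∈ P m → X.map φ σ ∈ P m') : subOf X P hP ⟶ X where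
  app _ := TypeCat.ofHom (fun σ => σ.1)
  naturality _ _ _ := rfl

def IsDegen2 (X : SSet.{0}) (σ : X _⦋2⦌) : Prop :=
  ∃ τ : X _⦋1⦌, σ = X.σ 0 τ ∨ σ = X.σ 1 τ

lemma isDegen2_of_sub (X : SSet.{0}) (P : ∀ m : SimplexCategoryᵒᵖ, Set (X.obj m))
    (hP : ∀ {m m' : SimplexCategoryᵒᵖ} (φ : m ⟶ m') {σ : X.obj m},
      σ ∈ P m → X.map φ σ ∈ P m')
    (σ : (subOf X P hP) _⦋2⦌) (h : IsDegen2 (subOf X P hP) σ) : IsDegen2 X σ.1 := by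
  obtain ⟨τ, h | h⟩ := h
  · exact ⟨τ.1, Or.inl (by subst h; rfl)⟩
  · exact ⟨τ.1, Or.inr (by subst h; rfl)⟩

lemma isDegen2_map {X Y : SSet.{0}} (f : X ⟶ Y) {σ : X _⦋2⦌}
    (h : IsDegen2 X σ) : IsDegen2 Y (f.app _ σ) := by
  obtain ⟨τ, h | h⟩ := h
  · exact ⟨f.app _ τ, Or.inl (by subst h; exact NatTrans.naturality_apply f _ τ)⟩
  · exact ⟨f.app _ τ, Or.inr (by subst h; exact NatTrans.naturality_apply f _ τ)⟩

structure SScaled : Type 1 where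
  carrier : SSet.{0}
  thin : Set (carrier _⦋2⦌)
  degen_mem : ∀ σ : carrier _⦋2⦌, IsDegen2 carrier σ → σ ∈ thin

@[ext]
structure SHom (A B : SScaled) : Type where
  map : A.carrier ⟶ B.carrier
  preserves : ∀ σ ∈ A.thin, map.app (Opposite.op (SimplexCategory.mk 2)) σ ∈ B.thin

instance : Category SScaled where
  Hom := SHom
  id A := ⟨𝟙 A.carrier, fun σ h => by simpa using h⟩
  comp f g := ⟨f.map ≫ g.map, fun σ h => by
    simpa using g.preserves _ (f.preserves _ h)⟩
  id_comp f := by apply SHom.ext; simp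
  comp_id f := by apply SHom.ext; simp
  assoc f g h := by apply SHom.ext; simp

def SScaled.restrict (B : SScaled) (P : ∀ m : SimplexCategoryᵒᵖ, Set (B.carrier.obj m))
    (hP : ∀ {m m' : SimplexCategoryᵒᵖ} (φ : m ⟶ m') {σ : B.carrier.obj m},
      σ ∈ P m → B.carrier.map φ σ ∈ P m') : SScaled where
  carrier := subOf B.carrier P hP
  thin := {σ | σ.1 ∈ B.thin}
  degen_mem σ h := B.degen_mem _ (isDegen2_of_sub _ _ _ _ h)

def SScaled.restrictIncl (B : SScaled) (P : ∀ m : SimplexCategoryᵒᵖ, Set (B.carrier.obj m))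
    (hP : ∀ {m m' : SimplexCategoryᵒᵖ} (φ : m ⟶ m') {σ : B.carrier.obj m},
      σ ∈ P m → B.carrier.map φ σ ∈ P m') : B.restrict P hP ⟶ B where
  map := subIncl B.carrier P hP
  preserves _ h := h

def tri {n : ℕ} (a b c : Fin (n + 1)) (hab : a ≤ b) (hbc : b ≤ c) :
    (stdSimplex n) _⦋2⦌ :=
  ⟨![a, b, c], by
    intro i j hij
    fin_cases i <;> fin_cases j <;>
      simp_all [Matrix.cons_val_zero, Matrix.cons_val_one, Matrix.head_cons] <;>
      first
        | rfl
        | exact hab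
        | exact hbc
        | exact le_trans hab hbc⟩

/-! ### The generating scaled anodyne maps -/

/-- The membership predicate of the horn `Λⁿᵢ ⊆ Δⁿ`: the simplices whose vertices,
together with `i`, do not exhaust `[n]`. -/
def hornP (n : ℕ) (i : Fin (n + 1)) :
    ∀ m : SimplexCategoryᵒᵖ, Set ((stdSimplex n).obj m) :=
  fun _ => {f | ∃ s : Fin (n + 1), s ≠ i ∧ ∀ x, f x ≠ s}

lemma hornP_closed (n : ℕ) (i : Fin (n + 1)) :
    ∀ {m m' : SimplexCategoryᵒᵖ} (φ : m ⟶ m') {σ : (stdSimplex n).obj m},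
      σ ∈ hornP n i m → (stdSimplex n).map φ σ ∈ hornP n i m' := by
  rintro m m' φ σ ⟨s, hsi, hs⟩
  exact ⟨s, hsi, fun x => hs _⟩

/-- The 2-simplex `Δ^{i-1,i,i+1}` of `Δⁿ`, for `0 < i < n`. -/
def an1Tri (n i : ℕ) (h0 : 0 < i) (hn : i < n) : (stdSimplex n) _⦋2⦌ :=
  tri ⟨i - 1, by omega⟩ ⟨i, by omega⟩ ⟨i + 1, by omega⟩
    (Fin.mk_le_mk.mpr (by omega)) (Fin.mk_le_mk.mpr (by omega))

/-- The target of the generating map (An1): `Δⁿ` scaled by `{Δ^{i-1,i,i+1}} ∪ {degenerate}`. -/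
def an1Target (n i : ℕ) (h0 : 0 < i) (hn : i < n) : SScaled where
  carrier := stdSimplex n
  thin := {σ | IsDegen2 _ σ ∨ σ = an1Tri n i h0 hn}
  degen_mem _ h := Or.inl h

/-- The source of the generating map (An1): the horn `Λⁿᵢ` with the restricted scaling. -/
def an1Source (n i : ℕ) (h0 : 0 < i) (hn : i < n) : SScaled :=
  (an1Target n i h0 hn).restrict (hornP n ⟨i, by omega⟩) (hornP_closed n ⟨i, by omega⟩)

/-- The generating scaled anodyne map (An1). -/
def an1Map (n i : ℕ) (h0 : 0 < i) (hn : i < n) :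
    an1Source n i h0 hn ⟶ an1Target n i h0 hn :=
  SScaled.restrictIncl (an1Target n i h0 hn) (hornP n ⟨i, by omega⟩)
    (hornP_closed n ⟨i, by omega⟩)

/-- The scaling `T₀` of `Δ⁴` appearing in the generating map (An2). -/
def an2T0 : Set ((stdSimplex 4) _⦋2⦌) :=
  {σ | IsDegen2 _ σ ∨
    σ = tri (0 : Fin 5) 2 4 (by decide) (by decide) ∨
    σ = tri (1 : Fin 5) 2 3 (by decide) (by decide) ∨
    σ = tri (0 : Fin 5) 1 3 (by decide) (by decide) ∨
    σ = tri (1 : Fin 5) 3 4 (by decide) (by decide) ∨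
    σ = tri (0 : Fin 5) 1 2 (by decide) (by decide)}

def an2Source : SScaled where
  carrier := stdSimplex 4
  thin := an2T0
  degen_mem _ h := Or.inl h

def an2Target : SScaled where
  carrier := stdSimplex 4
  thin := an2T0 ∪
    {tri (0 : Fin 5) 3 4 (by decide) (by decide),
     tri (0 : Fin 5) 1 4 (by decide) (by decide)}
  degen_mem _ h := Or.inl (Or.inl h)

/-- The generating scaled anodyne map (An2). -/
def an2Map : an2Source ⟶ an2Target where
  map := 𝟙 _
  preserves σ h := Or.inl h

/-- The collapse of a simplicial subset `A ⊆ X` to a point: a concrete model of the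
pushout `X ⨿_A Δ⁰` (for `A` nonempty in each degree). -/
def collapse (X : SSet.{0}) (A : ∀ m : SimplexCategoryᵒᵖ, Set (X.obj m))
    (hA : ∀ {m m' : SimplexCategoryᵒᵖ} (φ : m ⟶ m') {σ : X.obj m},
      σ ∈ A m → X.map φ σ ∈ A m') : SSet.{0} where
  obj m := Quot (fun f g : X.obj m => f ∈ A m ∧ g ∈ A m)
  map φ := TypeCat.ofHom (Quot.map (X.map φ) (fun _ _ h => ⟨hA φ h.1, hA φ h.2⟩))
  map_id m := by
    ext σ
    induction σ using Quot.ind with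
    | _ f => exact congrArg (Quot.mk _) (X.map_id_apply _ f)
  map_comp φ ψ := by
    ext σ
    induction σ using Quot.ind with
    | _ f => exact congrArg (Quot.mk _) (X.map_comp_apply φ ψ f)

/-- The simplices of `Δⁿ` lying in the edge `Δ^{0,1}`. -/
def edge01P (n : ℕ) : ∀ m : SimplexCategoryᵒᵖ, Set ((stdSimplex n).obj m) :=
  fun _ => {f | ∀ x, (f x).val ≤ 1}

lemma edge01P_closed (n : ℕ) :
    ∀ {m m' : SimplexCategoryᵒᵖ} (φ : m ⟶ m') {σ : (stdSimplex n).obj m},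
      σ ∈ edge01P n m → (stdSimplex n).map φ σ ∈ edge01P n m' := by
  intro m m' φ σ h x
  exact h _

/-- The underlying simplicial set of the target of (An3): `Δⁿ ⨿_{Δ^{0,1}} Δ⁰`. -/
def an3TargetSSet (n : ℕ) (hn : 2 < n) : SSet.{0} :=
  collapse (stdSimplex n) (edge01P n) (edge01P_closed n)

def an3Horn (n : ℕ) (hn : 2 < n) : SSet.{0} :=
  subOf (stdSimplex n) (hornP n 0) (hornP_closed n 0)

/-- The underlying simplicial set of the source of (An3): `Λⁿ₀ ⨿_{Δ^{0,1}} Δ⁰`. -/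
def an3SourceSSet (n : ℕ) (hn : 2 < n) : SSet.{0} :=
  collapse (an3Horn n hn) (fun m => {f | f.1 ∈ edge01P n m})
    (fun {m m'} φ {σ} h => edge01P_closed n φ h)

def an3Tri (n : ℕ) (hn : 2 < n) : (stdSimplex n) _⦋2⦌ :=
  tri ⟨0, by omega⟩ ⟨1, by omega⟩ ⟨n, by omega⟩
    (Fin.mk_le_mk.mpr (by omega)) (Fin.mk_le_mk.mpr (by omega))

lemma an3Tri_mem_horn (n : ℕ) (hn : 2 < n) :
    an3Tri n hn ∈ hornP n 0 (Opposite.op (SimplexCategory.mk 2)) := by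
  refine ⟨⟨2, by omega⟩, Fin.ne_of_val_ne (by simp), fun x => ?_⟩
  fin_cases x
  · exact Fin.ne_of_val_ne (show (0 : ℕ) ≠ 2 by omega)
  · exact Fin.ne_of_val_ne (show (1 : ℕ) ≠ 2 by omega)
  · exact Fin.ne_of_val_ne (show (n : ℕ) ≠ 2 by omega)

def an3Target (n : ℕ) (hn : 2 < n) : SScaled where
  carrier := an3TargetSSet n hn
  thin := {x | IsDegen2 _ x ∨ x = Quot.mk _ (an3Tri n hn)}
  degen_mem _ h := Or.inl h

def an3Source (n : ℕ) (hn : 2 < n) : SScaled where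
  carrier := an3SourceSSet n hn
  thin := {x | IsDegen2 _ x ∨ x = Quot.mk _ ⟨an3Tri n hn, an3Tri_mem_horn n hn⟩}
  degen_mem _ h := Or.inl h

/-- The generating scaled anodyne map (An3). -/
def an3proj (n : ℕ) (hn : 2 < n) : an3SourceSSet n hn ⟶ an3TargetSSet n hn where
  app m := TypeCat.ofHom (Quot.map (fun (f : (an3Horn n hn).obj m) => f.1) (fun _ _ h => ⟨h.1, h.2⟩))
  naturality _ _ φ := by ext σ; induction σ using Quot.ind; rfl

def an3Map (n : ℕ) (hn : 2 < n) : an3Source n hn ⟶ an3Target n hn where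
  map := an3proj n hn
  preserves σ h := by
    obtain h | h := h
    · exact Or.inl (isDegen2_map (an3proj n hn) h)
    · exact Or.inr (by subst h; rfl)

/-! ### Weakly saturated classes and scaled anodyne maps -/

section Saturation

open Limits

variable {C : Type*} [Category C]

/-- `f` is a retract of `g` (in the arrow category). -/
def IsRetractOf {A B X Y : C} (f : A ⟶ B) (g : X ⟶ Y) : Prop :=
  ∃ (i : A ⟶ X) (p : X ⟶ A) (j : B ⟶ Y) (q : Y ⟶ B),
    i ≫ p = 𝟙 A ∧ j ≫ q = 𝟙 B ∧ i ≫ g = f ≫ j ∧ g ≫ q = p ≫ f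

/-- The restriction, to `Set.Iio j`, of a functor indexed by a (well-)ordered type,
viewed as a cocone with apex `F.obj j`. -/
@[simps]
def restCocone {J : Type} [Preorder J] (F : J ⥤ C) (j : J) :
    Cocone ((Monotone.functor (f := (Subtype.val : Set.Iio j → J))
      (fun _ _ h => h)) ⋙ F) where
  pt := F.obj j
  ι :=
    { app := fun i => F.map (homOfLE i.2.le)
      naturality := fun i i' hii' => by
        dsimp [Monotone.functor]
        rw [← F.map_comp]
        simp }

/-- A class of morphisms is weakly saturated if it is stable under pushouts
(cobase change), retracts, and transfinite composition. -/
structure IsWeaklySaturated (P : MorphismProperty C) : Prop where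
  pushouts : ∀ ⦃A B A' B' : C⦄ (f : A ⟶ B) (g : A ⟶ A') (h : B ⟶ B') (i : A' ⟶ B'),
    IsPushout f g h i → P f → P i
  retracts : ∀ ⦃A B X Y : C⦄ (f : A ⟶ B) (g : X ⟶ Y), IsRetractOf f g → P g → P f
  transfinite : ∀ (J : Type) [LinearOrder J] [OrderBot J] [SuccOrder J]
    [WellFoundedLT J] (F : J ⥤ C) (c : Cocone F) (_ : IsColimit c)
    (_ : ∀ j : J, Order.IsSuccLimit j → Nonempty (IsColimit (restCocone F j)))
    (_ : ∀ j : J, ¬IsMax j → P (F.map (homOfLE (Order.le_succ j)))),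
    P (c.ι.app ⊥)

end Saturation

end

/-- The generating scaled anodyne maps (An1), (An2), (An3). -/
inductive AnodyneGenerator : ∀ ⦃A B : SScaled⦄, (A ⟶ B) → Prop
  | an1 (n i : ℕ) (h0 : 0 < i) (hn : i < n) : AnodyneGenerator (an1Map n i h0 hn)
  | an2 : AnodyneGenerator an2Map
  | an3 (n : ℕ) (hn : 2 < n) : AnodyneGenerator (an3Map n hn)

open Simplicial

/-- A map of scaled simplicial sets is *scaled anodyne* if it lies in the weakly
saturated class of maps generated by the maps (An1), (An2) and (An3); that is,
if it lies in every weakly saturated class of morphisms of `SScaled` containing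
these generating maps. -/
def ScaledAnodyne : MorphismProperty SScaled := fun _ _ f =>
  ∀ P : MorphismProperty SScaled, IsWeaklySaturated P →
    (∀ ⦃A B : SScaled⦄ (g : A ⟶ B), AnodyneGenerator g → P g) → P f

/-- The generalized horn `Λʳ_M ⊆ Δʳ`: the union of the codimension-one faces
`Δ^{[r]∖{s}}` over all `s ∉ M`; its simplices are those whose vertices avoid
some `s ∉ M`. -/
def genHornP (r : ℕ) (M : Finset (Fin (r + 1))) :
    ∀ m : SimplexCategoryᵒᵖ, Set ((stdSimplex r).obj m) :=
  fun _ => {f | ∃ s : Fin (r + 1), s ∉ M ∧ ∀ x, f x ≠ s}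

lemma genHornP_closed (r : ℕ) (M : Finset (Fin (r + 1))) :
    ∀ {m m' : SimplexCategoryᵒᵖ} (φ : m ⟶ m') {σ : (stdSimplex r).obj m},
      σ ∈ genHornP r M m → (stdSimplex r).map φ σ ∈ genHornP r M m' := by
  rintro m m' φ σ ⟨s, hsM, hs⟩
  exact ⟨s, hsM, fun x => hs _⟩

section Generalities

open Limits

variable {C : Type*} [Category C]

/-- The cocone at a top element of a preorder-indexed functor. -/
@[simps]
def topCocone {J : Type} [Preorder J] [OrderTop J] (F : J ⥤ C) : Cocone F where
  pt := F.obj ⊤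
  ι :=
    { app := fun j => F.map (homOfLE le_top)
      naturality := fun i j h => by
        dsimp
        rw [← F.map_comp, Category.comp_id]
        congr 1 }

/-- The cocone at a top element is a colimit. -/
def topCoconeIsColimit {J : Type} [Preorder J] [OrderTop J] (F : J ⥤ C) :
    IsColimit (topCocone F) where
  desc s := s.ι.app ⊤
  fac s j := by
    have := s.ι.naturality (homOfLE (le_top : j ≤ ⊤))
    dsimp at this ⊢
    rw [Category.comp_id] at this
    exact this
  uniq s m hm := by
    have := hm ⊤
    simp at this
    exact (Category.id_comp m).symm.trans this

variable {P : MorphismProperty C}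

theorem IsWeaklySaturated.id_mem (hP : IsWeaklySaturated P) (X : C) : P (𝟙 X) := by
  have h := @IsWeaklySaturated.transfinite _ _ _ hP (Fin 1) inferInstance
    inferInstance inferInstance (inferInstance : WellFoundedLT (Fin 1))
    ((Functor.const (Fin 1)).obj X) (topCocone _) (topCoconeIsColimit _)
    (fun j hj => absurd hj (by
      have : j = ⊥ := Subsingleton.elim _ _
      subst this
      exact Order.not_isSuccLimit_bot))
    (fun j hj => absurd (by
      intro b _; exact le_of_eq (Subsingleton.elim b j) : IsMax j) hj)
  exact h

theorem IsWeaklySaturated.comp_mem (hP : IsWeaklySaturated P) {X₀ X₁ X₂ : C}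
    (f : X₀ ⟶ X₁) (g : X₁ ⟶ X₂) (hf : P f) (hg : P g) : P (f ≫ g) := by
  have hcov01 : (0 : Fin 3) ⋖ 1 := by
    constructor
    · decide
    · intro c h1 h2
      rw [Fin.lt_def] at h1 h2
      omega
  have hcov12 : (1 : Fin 3) ⋖ 2 := by
    constructor
    · decide
    · intro c h1 h2
      rw [Fin.lt_def] at h1 h2
      omega
  have h := @IsWeaklySaturated.transfinite _ _ _ hP (Fin 3) inferInstance
    inferInstance inferInstance (inferInstance : WellFoundedLT (Fin 3))
    (ComposableArrows.mk₂ f g)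
    (topCocone _) (topCoconeIsColimit _)
    (fun j hj => by
      exfalso
      fin_cases j
      · exact Order.not_isSuccLimit_bot hj
      · exact hj.isSuccPrelimit 0 hcov01
      · exact hj.isSuccPrelimit 1 hcov12)
    (fun j hj => by
      fin_cases j
      · exact hf
      · exact hg
      · exact absurd (fun b _ => b.le_last : IsMax (2 : Fin 3)) hj)
  exact h

end Generalities

theorem IsWeaklySaturated.mem_of_arrowIso {C : Type*} [Category C] {P : MorphismProperty C}
    (hP : IsWeaklySaturated P) {A B X Y : C} (f : A ⟶ B) (g : X ⟶ Y)
    (e₁ : A ≅ X) (e₂ : B ≅ Y) (comm : e₁.hom ≫ g = f ≫ e₂.hom) (hg : P g) : P f := by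
  refine hP.retracts f g ⟨e₁.hom, e₁.inv, e₂.hom, e₂.inv, e₁.hom_inv_id, e₂.hom_inv_id, comm, ?_⟩ hg
  have hg' : g = e₁.inv ≫ f ≫ e₂.hom := by rw [← comm, Iso.inv_hom_id_assoc]
  rw [hg']
  simp

section Builders

/-- Inclusion between restrictions of `SScaled.mk` along bigger predicates/scalings. -/
def oincl {Z : SSet.{0}} {S S' : Set (Z _⦋2⦌)}
    {hS : ∀ σ, IsDegen2 Z σ → σ ∈ S} {hS' : ∀ σ, IsDegen2 Z σ → σ ∈ S'}
    {P P' : ∀ m : SimplexCategoryᵒᵖ, Set (Z.obj m)}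
    {hP : ∀ {m m' : SimplexCategoryᵒᵖ} (φ : m ⟶ m') {σ : Z.obj m}, σ ∈ P m → Z.map φ σ ∈ P m'}
    {hP' : ∀ {m m' : SimplexCategoryᵒᵖ} (φ : m ⟶ m') {σ : Z.obj m}, σ ∈ P' m → Z.map φ σ ∈ P' m'}
    (hPP' : ∀ (m : SimplexCategoryᵒᵖ) (σ : Z.obj m), σ ∈ P m → σ ∈ P' m)
    (hSS' : ∀ σ : Z _⦋2⦌, σ ∈ P (Opposite.op (SimplexCategory.mk 2)) → σ ∈ S → σ ∈ S') :
    (SScaled.mk Z S hS).restrict P hP ⟶ (SScaled.mk Z S' hS').restrict P' hP' where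
  map :=
    { app := fun m => TypeCat.ofHom (fun σ => ⟨σ.1, hPP' m σ.1 σ.2⟩)
      naturality := fun m m' φ => rfl }
  preserves := fun σ hσ => hSS' σ.1 σ.2 hσ

/-- Iso between restrictions along equivalent predicates. -/
def predIso (B : SScaled) {P Q : ∀ m : SimplexCategoryᵒᵖ, Set (B.carrier.obj m)}
    {hP : ∀ {m m' : SimplexCategoryᵒᵖ} (φ : m ⟶ m') {σ : B.carrier.obj m},
      σ ∈ P m → B.carrier.map φ σ ∈ P m'}
    {hQ : ∀ {m m' : SimplexCategoryᵒᵖ} (φ : m ⟶ m') {σ : B.carrier.obj m},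
      σ ∈ Q m → B.carrier.map φ σ ∈ Q m'}
    (hPQ : ∀ (m : SimplexCategoryᵒᵖ) (σ : B.carrier.obj m), σ ∈ P m ↔ σ ∈ Q m) :
    B.restrict P hP ≅ B.restrict Q hQ where
  hom :=
    { map :=
        { app := fun m => TypeCat.ofHom (fun σ => ⟨σ.1, (hPQ m σ.1).1 σ.2⟩)
          naturality := fun m m' φ => rfl }
      preserves := fun σ hσ => hσ }
  inv :=
    { map :=
        { app := fun m => TypeCat.ofHom (fun σ => ⟨σ.1, (hPQ m σ.1).2 σ.2⟩)
          naturality := fun m m' φ => rfl }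
      preserves := fun σ hσ => hσ }
  hom_inv_id := rfl
  inv_hom_id := rfl

/-- Restricting along the trivial predicate is an iso. -/
def isoUniv (B : SScaled) :
    B.restrict (fun _ => Set.univ) (fun _ _ _ => trivial) ≅ B where
  hom := B.restrictIncl _ _
  inv :=
    { map :=
        { app := fun m => TypeCat.ofHom (fun σ => ⟨σ, trivial⟩)
          naturality := fun m m' φ => rfl }
      preserves := fun σ hσ => hσ }
  hom_inv_id := rfl
  inv_hom_id := rfl

end Builders

section GPL

open Limits

variable {Z : SSet.{0}} {S₀ S₁ S₂ S₃ : Set (Z _⦋2⦌)}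
    {hS₀ : ∀ σ, IsDegen2 Z σ → σ ∈ S₀} {hS₁ : ∀ σ, IsDegen2 Z σ → σ ∈ S₁}
    {hS₂ : ∀ σ, IsDegen2 Z σ → σ ∈ S₂} {hS₃ : ∀ σ, IsDegen2 Z σ → σ ∈ S₃}
    {P₀ P₁ P₂ P₃ : ∀ m : SimplexCategoryᵒᵖ, Set (Z.obj m)}
    {hP₀ : ∀ {m m' : SimplexCategoryᵒᵖ} (φ : m ⟶ m') {σ : Z.obj m}, σ ∈ P₀ m → Z.map φ σ ∈ P₀ m'}
    {hP₁ : ∀ {m m' : SimplexCategoryᵒᵖ} (φ : m ⟶ m') {σ : Z.obj m}, σ ∈ P₁ m → Z.map φ σ ∈ P₁ m'}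
    {hP₂ : ∀ {m m' : SimplexCategoryᵒᵖ} (φ : m ⟶ m') {σ : Z.obj m}, σ ∈ P₂ m → Z.map φ σ ∈ P₂ m'}
    {hP₃ : ∀ {m m' : SimplexCategoryᵒᵖ} (φ : m ⟶ m') {σ : Z.obj m}, σ ∈ P₃ m → Z.map φ σ ∈ P₃ m'}

theorem gpl_agree
    (h01P : ∀ m σ, σ ∈ P₀ m → σ ∈ P₁ m)
    (h01S : ∀ σ : Z _⦋2⦌, σ ∈ P₀ (Opposite.op (SimplexCategory.mk 2)) → σ ∈ S₀ → σ ∈ S₁)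
    (h02P : ∀ m σ, σ ∈ P₀ m → σ ∈ P₂ m)
    (h02S : ∀ σ : Z _⦋2⦌, σ ∈ P₀ (Opposite.op (SimplexCategory.mk 2)) → σ ∈ S₀ → σ ∈ S₂)
    (h12 : ∀ m σ, σ ∈ P₁ m → σ ∈ P₂ m → σ ∈ P₀ m)
    (s : PushoutCocone (oincl (hS := hS₀) (hS' := hS₁) (hP := hP₀) (hP' := hP₁) h01P h01S)
      (oincl (hS := hS₀) (hS' := hS₂) (hP := hP₀) (hP' := hP₂) h02P h02S))
    (m : SimplexCategoryᵒᵖ) (σ : Z.obj m) (hσ1 : σ ∈ P₁ m) (hσ2 : σ ∈ P₂ m) :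
    s.inl.map.app m (⟨σ, hσ1⟩ : ((SScaled.mk Z S₁ hS₁).restrict P₁ hP₁).carrier.obj m) =
      s.inr.map.app m (⟨σ, hσ2⟩ : ((SScaled.mk Z S₂ hS₂).restrict P₂ hP₂).carrier.obj m) := by
  have := congrArg (fun (u : SHom ((SScaled.mk Z S₀ hS₀).restrict P₀ hP₀) s.pt) =>
    u.map.app m (⟨σ, h12 m σ hσ1 hσ2⟩ :
      ((SScaled.mk Z S₀ hS₀).restrict P₀ hP₀).carrier.obj m)) s.condition
  exact this

open Classical in
/-- The descent map out of the union. -/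
noncomputable def gplDesc
    (h01P : ∀ m σ, σ ∈ P₀ m → σ ∈ P₁ m)
    (h01S : ∀ σ : Z _⦋2⦌, σ ∈ P₀ (Opposite.op (SimplexCategory.mk 2)) → σ ∈ S₀ → σ ∈ S₁)
    (h02P : ∀ m σ, σ ∈ P₀ m → σ ∈ P₂ m)
    (h02S : ∀ σ : Z _⦋2⦌, σ ∈ P₀ (Opposite.op (SimplexCategory.mk 2)) → σ ∈ S₀ → σ ∈ S₂)
    (h12 : ∀ m σ, σ ∈ P₁ m → σ ∈ P₂ m → σ ∈ P₀ m)
    (h3 : ∀ m σ, σ ∈ P₃ m → σ ∈ P₁ m ∨ σ ∈ P₂ m)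
    (hth : ∀ σ : Z _⦋2⦌, σ ∈ P₃ (Opposite.op (SimplexCategory.mk 2)) → σ ∈ S₃ →
      (σ ∈ P₁ (Opposite.op (SimplexCategory.mk 2)) ∧ σ ∈ S₁) ∨
      (σ ∈ P₂ (Opposite.op (SimplexCategory.mk 2)) ∧ σ ∈ S₂))
    (s : PushoutCocone (oincl (hS := hS₀) (hS' := hS₁) (hP := hP₀) (hP' := hP₁) h01P h01S)
      (oincl (hS := hS₀) (hS' := hS₂) (hP := hP₀) (hP' := hP₂) h02P h02S)) :
    (SScaled.mk Z S₃ hS₃).restrict P₃ hP₃ ⟶ s.pt where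
  map :=
    { app := fun m => TypeCat.ofHom (fun σ =>
        if h : σ.1 ∈ P₁ m then s.inl.map.app m ⟨σ.1, h⟩
        else s.inr.map.app m ⟨σ.1, (h3 m σ.1 σ.2).resolve_left h⟩)
      naturality := by
        intro m m' φ
        ext σ
        show dite _ _ _ = s.pt.carrier.map φ (dite _ _ _)
        split_ifs with h1 h2 h2
        · exact NatTrans.naturality_apply s.inl.map φ ⟨σ.1, h2⟩
        · have h2' : σ.1 ∈ P₂ m := (h3 m σ.1 σ.2).resolve_left h2
          have e1 : s.inl.map.app m' ⟨Z.map φ σ.1, h1⟩ =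
              s.inr.map.app m' ⟨Z.map φ σ.1, hP₂ φ h2'⟩ :=
            gpl_agree h01P h01S h02P h02S h12 s m' (Z.map φ σ.1) h1 (hP₂ φ h2')
          exact e1.trans (NatTrans.naturality_apply s.inr.map φ ⟨σ.1, h2'⟩)
        · exact absurd (hP₁ φ h2) h1
        · exact NatTrans.naturality_apply s.inr.map φ ⟨σ.1, (h3 m σ.1 σ.2).resolve_left h2⟩ }
  preserves := by
    intro σ hσ
    rcases hth σ.1 σ.2 hσ with ⟨h1, hs1⟩ | ⟨h2, hs2⟩
    · show dite _ _ _ ∈ _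
      rw [dif_pos h1]
      exact s.inl.preserves ⟨σ.1, h1⟩ hs1
    · show dite _ _ _ ∈ _
      by_cases h1 : σ.1 ∈ P₁ (Opposite.op (SimplexCategory.mk 2))
      · rw [dif_pos h1, gpl_agree h01P h01S h02P h02S h12 s _ _ h1 h2]
        exact s.inr.preserves ⟨σ.1, h2⟩ hs2
      · rw [dif_neg h1]
        exact s.inr.preserves ⟨σ.1, h2⟩ hs2

/-- The general pushout lemma for unions of subpresheaves with compatible scalings. -/
theorem isPushout_oincl
    (h01P : ∀ m σ, σ ∈ P₀ m → σ ∈ P₁ m)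
    (h01S : ∀ σ : Z _⦋2⦌, σ ∈ P₀ (Opposite.op (SimplexCategory.mk 2)) → σ ∈ S₀ → σ ∈ S₁)
    (h02P : ∀ m σ, σ ∈ P₀ m → σ ∈ P₂ m)
    (h02S : ∀ σ : Z _⦋2⦌, σ ∈ P₀ (Opposite.op (SimplexCategory.mk 2)) → σ ∈ S₀ → σ ∈ S₂)
    (h13P : ∀ m σ, σ ∈ P₁ m → σ ∈ P₃ m)
    (h13S : ∀ σ : Z _⦋2⦌, σ ∈ P₁ (Opposite.op (SimplexCategory.mk 2)) → σ ∈ S₁ → σ ∈ S₃)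
    (h23P : ∀ m σ, σ ∈ P₂ m → σ ∈ P₃ m)
    (h23S : ∀ σ : Z _⦋2⦌, σ ∈ P₂ (Opposite.op (SimplexCategory.mk 2)) → σ ∈ S₂ → σ ∈ S₃)
    (h12 : ∀ m σ, σ ∈ P₁ m → σ ∈ P₂ m → σ ∈ P₀ m)
    (h3 : ∀ m σ, σ ∈ P₃ m → σ ∈ P₁ m ∨ σ ∈ P₂ m)
    (hth : ∀ σ : Z _⦋2⦌, σ ∈ P₃ (Opposite.op (SimplexCategory.mk 2)) → σ ∈ S₃ →
      (σ ∈ P₁ (Opposite.op (SimplexCategory.mk 2)) ∧ σ ∈ S₁) ∨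
      (σ ∈ P₂ (Opposite.op (SimplexCategory.mk 2)) ∧ σ ∈ S₂)) :
    IsPushout (oincl (hS := hS₀) (hS' := hS₁) (hP := hP₀) (hP' := hP₁) h01P h01S)
      (oincl (hS := hS₀) (hS' := hS₂) (hP := hP₀) (hP' := hP₂) h02P h02S)
      (oincl (hS := hS₁) (hS' := hS₃) (hP := hP₁) (hP' := hP₃) h13P h13S)
      (oincl (hS := hS₂) (hS' := hS₃) (hP := hP₂) (hP' := hP₃) h23P h23S) := by
  have weq : oincl (hS := hS₀) (hS' := hS₁) (hP := hP₀) (hP' := hP₁) h01P h01S ≫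
      oincl (hS := hS₁) (hS' := hS₃) (hP := hP₁) (hP' := hP₃) h13P h13S =
      oincl (hS := hS₀) (hS' := hS₂) (hP := hP₀) (hP' := hP₂) h02P h02S ≫
      oincl (hS := hS₂) (hS' := hS₃) (hP := hP₂) (hP' := hP₃) h23P h23S := by
    apply SHom.ext
    apply NatTrans.ext
    funext m; ext σ
    apply Subtype.ext
    rfl
  refine IsPushout.of_isColimit (PushoutCocone.IsColimit.mk weq
    (fun s => gplDesc h01P h01S h02P h02S h12 h3 hth s) ?_ ?_ ?_)
  · intro s
    classical
    apply SHom.ext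
    apply NatTrans.ext
    funext m; ext σ
    show dite _ _ _ = _
    split_ifs with h
    · rfl
    · exact (h σ.2).elim
  · intro s
    classical
    apply SHom.ext
    apply NatTrans.ext
    funext m; ext σ
    show dite _ _ _ = _
    split_ifs with h1
    · exact gpl_agree h01P h01S h02P h02S h12 s m σ.1 h1 σ.2
    · rfl
  · intro s m hm1 hm2
    classical
    apply SHom.ext
    apply NatTrans.ext
    funext m'; ext σ
    show _ = dite _ _ _
    split_ifs with h1
    · exact congrArg (fun (u : SHom ((SScaled.mk Z S₁ hS₁).restrict P₁ hP₁) s.pt) =>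
        u.map.app m' ⟨σ.1, h1⟩) hm1
    · exact congrArg (fun (u : SHom ((SScaled.mk Z S₂ hS₂).restrict P₂ hP₂) s.pt) =>
        u.map.app m' ⟨σ.1, (h3 m' σ.1 σ.2).resolve_left h1⟩) hm2

end GPL

section Face

/-- The face embedding `Fin (k+1) →o Fin (k+2)` skipping `m`. -/
def fe {k : ℕ} (m : Fin (k + 2)) : Fin (k + 1) →o Fin (k + 2) where
  toFun x := ⟨if x.1 < m.1 then x.1 else x.1 + 1, by have := x.isLt; split_ifs <;> omega⟩
  monotone' a b hab := by
    have h := (Fin.le_def).mp hab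
    apply Fin.mk_le_mk.mpr
    split_ifs <;> omega

lemma fe_val {k : ℕ} (m : Fin (k + 2)) (x : Fin (k + 1)) :
    (fe m x).1 = if x.1 < m.1 then x.1 else x.1 + 1 := rfl

lemma fe_injective {k : ℕ} (m : Fin (k + 2)) : Function.Injective (fe m) := by
  intro a b hab
  have := congrArg Fin.val hab
  rw [fe_val, fe_val] at this
  apply Fin.ext
  split_ifs at this <;> omega

lemma fe_lt_iff {k : ℕ} (m : Fin (k + 2)) (a b : Fin (k + 1)) :
    fe m a < fe m b ↔ a < b := by
  rw [Fin.lt_def, Fin.lt_def, fe_val, fe_val]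
  split_ifs <;> omega

lemma fe_ne {k : ℕ} (m : Fin (k + 2)) (x : Fin (k + 1)) : fe m x ≠ m := by
  apply Fin.ne_of_val_ne
  rw [fe_val]
  split_ifs <;> omega

/-- The retraction of the face embedding. -/
def rho {k : ℕ} (m : Fin (k + 2)) : Fin (k + 2) →o Fin (k + 1) where
  toFun y := ⟨if y.1 < m.1 then y.1 else y.1 - 1, by
    have := y.isLt; have := m.isLt; split_ifs <;> omega⟩
  monotone' a b hab := by
    have h := (Fin.le_def).mp hab
    apply Fin.mk_le_mk.mpr
    split_ifs <;> omega

lemma rho_val {k : ℕ} (m : Fin (k + 2)) (y : Fin (k + 2)) :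
    (rho m y).1 = if y.1 < m.1 then y.1 else y.1 - 1 := rfl

lemma rho_fe {k : ℕ} (m : Fin (k + 2)) (x : Fin (k + 1)) : rho m (fe m x) = x := by
  apply Fin.ext
  rw [rho_val, fe_val]
  split_ifs <;> omega

lemma fe_rho {k : ℕ} (m : Fin (k + 2)) (y : Fin (k + 2)) (hy : y ≠ m) : fe m (rho m y) = y := by
  have hy' : y.1 ≠ m.1 := Fin.val_ne_of_ne hy
  apply Fin.ext
  rw [fe_val, rho_val]
  split_ifs <;> omega

/-- The map of simplicial sets induced by the face embedding. -/
def feMap (k : ℕ) (m : Fin (k + 2)) : stdSimplex k ⟶ stdSimplex (k + 1) where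
  app mm := TypeCat.ofHom (fun f => (fe m).comp f)
  naturality _ _ _ := rfl

/-- The scaling on the face induced by a scaling upstairs. -/
def faceT (k : ℕ) (m : Fin (k + 2)) (T : Set ((stdSimplex (k + 1)) _⦋2⦌)) :
    Set ((stdSimplex k) _⦋2⦌) :=
  {σ | (feMap k m).app (Opposite.op (SimplexCategory.mk 2)) σ ∈ T}

lemma faceT_degen (k : ℕ) (m : Fin (k + 2)) (T : Set ((stdSimplex (k + 1)) _⦋2⦌))
    (hT : ∀ σ, IsDegen2 (stdSimplex (k + 1)) σ → σ ∈ T) :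
    ∀ σ, IsDegen2 (stdSimplex k) σ → σ ∈ faceT k m T :=
  fun σ h => hT _ (isDegen2_map (feMap k m) h)

/-- The predicate of lying in the face opposite `m`. -/
def ImP (k : ℕ) (m : Fin (k + 2)) : ∀ mm : SimplexCategoryᵒᵖ, Set ((stdSimplex (k + 1)).obj mm) :=
  fun _ => {f | ∀ x, f x ≠ m}

lemma ImP_closed (k : ℕ) (m : Fin (k + 2)) :
    ∀ {mm mm' : SimplexCategoryᵒᵖ} (φ : mm ⟶ mm') {σ : (stdSimplex (k + 1)).obj mm},
      σ ∈ ImP k m mm → (stdSimplex (k + 1)).map φ σ ∈ ImP k m mm' := by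
  intro mm mm' φ σ h x
  exact h _

/-- Compression of a simplex in the face to the standard `k`-simplex. -/
def compress (k : ℕ) (m : Fin (k + 2)) {mm : SimplexCategoryᵒᵖ}
    (f : (stdSimplex (k + 1)).obj mm) : (stdSimplex k).obj mm :=
  (rho m).comp f

lemma feMap_compress (k : ℕ) (m : Fin (k + 2)) {mm : SimplexCategoryᵒᵖ}
    (f : (stdSimplex (k + 1)).obj mm) (hf : ∀ x, f x ≠ m) :
    (feMap k m).app mm (compress k m f) = f := by
  apply DFunLike.ext
  intro x
  exact fe_rho m (f x) (hf x)

lemma compress_feMap (k : ℕ) (m : Fin (k + 2)) {mm : SimplexCategoryᵒᵖ}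
    (g : (stdSimplex k).obj mm) :
    compress k m ((feMap k m).app mm g) = g := by
  apply DFunLike.ext
  intro x
  exact rho_fe m (g x)

variable {k : ℕ} {m : Fin (k + 2)} {T : Set ((stdSimplex (k + 1)) _⦋2⦌)}
  {hT : ∀ σ, IsDegen2 (stdSimplex (k + 1)) σ → σ ∈ T}

/-- The iso between a restricted subobject of the face upstairs and the corresponding
restricted subobject of the standard `k`-simplex. -/
def faceIso
    {PR : ∀ mm : SimplexCategoryᵒᵖ, Set ((stdSimplex (k + 1)).obj mm)}
    {hPR : ∀ {mm mm' : SimplexCategoryᵒᵖ} (φ : mm ⟶ mm') {σ : (stdSimplex (k + 1)).obj mm},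
      σ ∈ PR mm → (stdSimplex (k + 1)).map φ σ ∈ PR mm'}
    {PK : ∀ mm : SimplexCategoryᵒᵖ, Set ((stdSimplex k).obj mm)}
    {hPK : ∀ {mm mm' : SimplexCategoryᵒᵖ} (φ : mm ⟶ mm') {σ : (stdSimplex k).obj mm},
      σ ∈ PK mm → (stdSimplex k).map φ σ ∈ PK mm'}
    (hsub : ∀ (mm) (f : (stdSimplex (k + 1)).obj mm), f ∈ PR mm → ∀ x, f x ≠ m)
    (corr1 : ∀ (mm) (f : (stdSimplex (k + 1)).obj mm), f ∈ PR mm → compress k m f ∈ PK mm)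
    (corr2 : ∀ (mm) (g : (stdSimplex k).obj mm), g ∈ PK mm → (feMap k m).app mm g ∈ PR mm) :
    (SScaled.mk (stdSimplex (k + 1)) T hT).restrict PR hPR ≅
      (SScaled.mk (stdSimplex k) (faceT k m T) (faceT_degen k m T hT)).restrict PK hPK where
  hom :=
    { map :=
        { app := fun mm => TypeCat.ofHom (fun σ => ⟨compress k m σ.1, corr1 mm σ.1 σ.2⟩)
          naturality := fun mm mm' φ => rfl }
      preserves := by
        intro σ hσ
        show (feMap k m).app _ (compress k m σ.1) ∈ T
        rw [feMap_compress k m σ.1 (hsub _ σ.1 σ.2)]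
        exact hσ }
  inv :=
    { map :=
        { app := fun mm => TypeCat.ofHom (fun g => ⟨(feMap k m).app mm g.1, corr2 mm g.1 g.2⟩)
          naturality := fun mm mm' φ => rfl }
      preserves := fun g hg => hg }
  hom_inv_id := by
    apply SHom.ext
    apply NatTrans.ext
    funext mm; ext σ
    apply Subtype.ext
    exact feMap_compress k m σ.1 (hsub _ σ.1 σ.2)
  inv_hom_id := by
    apply SHom.ext
    apply NatTrans.ext
    funext mm; ext g
    apply Subtype.ext
    exact compress_feMap k m g.1

end Face

section Transfer

variable {k : ℕ} {m : Fin (k + 2)} {T : Set ((stdSimplex (k + 1)) _⦋2⦌)}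
  {hT : ∀ σ, IsDegen2 (stdSimplex (k + 1)) σ → σ ∈ T}

/-- The preimage of `M` under the face embedding. -/
def faceM (m : Fin (k + 2)) (M : Finset (Fin (k + 2))) : Finset (Fin (k + 1)) :=
  Finset.univ.filter (fun x => fe m x ∈ M)

lemma mem_faceM {M : Finset (Fin (k + 2))} {x : Fin (k + 1)} :
    x ∈ faceM m M ↔ fe m x ∈ M := by
  simp [faceM]

/-- The generalized horn of the face corresponds to the restriction of the generalized horn. -/
lemma horn_corr (M : Finset (Fin (k + 2))) (hmM : m ∈ M) (mm : SimplexCategoryᵒᵖ)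
    (f : (stdSimplex (k + 1)).obj mm) (hf : ∀ x, f x ≠ m) :
    f ∈ genHornP (k + 1) M mm ↔ compress k m f ∈ genHornP k (faceM m M) mm := by
  constructor
  · rintro ⟨s, hsM, hs⟩
    have hsm : s ≠ m := fun h => hsM (h ▸ hmM)
    refine ⟨rho m s, fun hmem => hsM ?_, fun x heq => hs x ?_⟩
    · rw [mem_faceM, fe_rho m s hsm] at hmem
      exact hmem
    · rw [← fe_rho m (f x) (hf x), ← fe_rho m s hsm]
      exact congrArg (fe m) heq
  · rintro ⟨s', hs', hs⟩
    refine ⟨fe m s', fun hmem => hs' (mem_faceM.mpr hmem), fun x heq => hs x ?_⟩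
    show rho m (f x) = s'
    rw [heq, rho_fe]

/-- The image under the face map of a triangle. -/
lemma feMap_tri (a b c : Fin (k + 1)) (hab : a ≤ b) (hbc : b ≤ c) :
    (feMap k m).app (Opposite.op (SimplexCategory.mk 2)) (tri a b c hab hbc) =
      tri (fe m a) (fe m b) (fe m c) ((fe m).monotone hab) ((fe m).monotone hbc) := by
  apply DFunLike.ext
  intro x
  fin_cases x <;> rfl

/-- The intersection of the generalized horn with the face. -/
def hornCapIm (k : ℕ) (m : Fin (k + 2)) (M : Finset (Fin (k + 2))) :
    ∀ mm : SimplexCategoryᵒᵖ, Set ((stdSimplex (k + 1)).obj mm) :=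
  fun mm => {f | f ∈ genHornP (k + 1) M mm ∧ f ∈ ImP k m mm}

lemma hornCapIm_closed (k : ℕ) (m : Fin (k + 2)) (M : Finset (Fin (k + 2))) :
    ∀ {mm mm' : SimplexCategoryᵒᵖ} (φ : mm ⟶ mm') {σ : (stdSimplex (k + 1)).obj mm},
      σ ∈ hornCapIm k m M mm → (stdSimplex (k + 1)).map φ σ ∈ hornCapIm k m M mm' := by
  intro mm mm' φ σ h
  exact ⟨genHornP_closed _ _ φ h.1, ImP_closed k m φ h.2⟩

/-- Transfer of the anodyne property from the face horn inclusion (at level `k`)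
to the inclusion of the generalized horn intersected with the face into the face. -/
theorem face_P_transfer (P : MorphismProperty SScaled) (hP : IsWeaklySaturated P)
    (M : Finset (Fin (k + 2))) (hmM : m ∈ M)
    (hprem : P ((SScaled.mk (stdSimplex k) (faceT k m T) (faceT_degen k m T hT)).restrictIncl
      (genHornP k (faceM m M)) (genHornP_closed k (faceM m M)))) :
    P (oincl (Z := stdSimplex (k + 1)) (S := T) (S' := T) (hS := hT) (hS' := hT)
      (hP := hornCapIm_closed k m M) (hP' := ImP_closed k m)
      (fun mm σ h => h.2) (fun σ _ h => h)) := by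
  refine hP.mem_of_arrowIso _ _
    (faceIso (T := T) (hT := hT)
      (hsub := fun mm f h => h.2)
      (corr1 := fun mm f h => (horn_corr M hmM mm f h.2).mp h.1)
      (corr2 := fun mm g hg => ⟨?_, fun x => fe_ne m (g x)⟩))
    ((faceIso (T := T) (hT := hT) (PR := ImP k m) (hPR := ImP_closed k m)
      (PK := fun _ => Set.univ) (hPK := fun _ _ _ => trivial)
      (hsub := fun mm f h => h)
      (corr1 := fun mm f h => trivial)
      (corr2 := fun mm g hg x => fe_ne m (g x))) ≪≫
      isoUniv _) ?_ hprem
  · have := (horn_corr M hmM mm ((feMap k m).app mm g) (fun x => fe_ne m (g x))).mpr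
    rw [compress_feMap] at this
    exact this hg
  · apply SHom.ext
    apply NatTrans.ext
    funext mm; ext σ
    rfl

end Transfer

section BaseCase

lemma tri_congr {n : ℕ} {a b c a' b' c' : Fin (n + 1)} (ha : a = a') (hb : b = b') (hc : c = c')
    {h1 : a ≤ b} {h2 : b ≤ c} {h1' : a' ≤ b'} {h2' : b' ≤ c'} :
    tri a b c h1 h2 = tri a' b' c' h1' h2' := by
  subst ha; subst hb; subst hc; rfl

/-- A 2-simplex of `Δʳ` not in the horn `Λʳ_t` forces `r = 3` and it is the missing face. -/
lemma not_horn_2simplex {r : ℕ} (hr : 3 ≤ r) (t : Fin (r + 1)) (σ : (stdSimplex r) _⦋2⦌)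
    (h : σ ∉ hornP r t (Opposite.op (SimplexCategory.mk 2))) :
    r = 3 ∧ Function.Injective σ ∧ Set.range σ = {x | x ≠ t} := by
  have hsurj : ∀ s : Fin (r + 1), s ≠ t → ∃ x, σ x = s := by
    intro s hs
    by_contra hc
    push_neg at hc
    exact h ⟨s, hs, hc⟩
  classical
  set img := Finset.image (fun x => σ x) Finset.univ with himg
  have hsub : Finset.univ.erase t ⊆ img := by
    intro s hs
    obtain ⟨x, hx⟩ := hsurj s (Finset.ne_of_mem_erase hs)
    exact Finset.mem_image.mpr ⟨x, Finset.mem_univ x, hx⟩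
  have hcard1 : r ≤ img.card := by
    have := Finset.card_le_card hsub
    rwa [Finset.card_erase_of_mem (Finset.mem_univ t), Finset.card_univ, Fintype.card_fin] at this
  have hcard2 : img.card ≤ 3 := by
    have := Finset.card_image_le (s := (Finset.univ : Finset (Fin 3))) (f := fun x => σ x)
    simpa using this
  have hr3 : r = 3 := le_antisymm (hcard1.trans hcard2) hr
  have huniv : ¬ t ∈ img := by
    intro ht
    have : Finset.univ ⊆ img := by
      intro s _
      by_cases hst : s = t
      · exact hst ▸ ht
      · exact hsub (Finset.mem_erase.mpr ⟨hst, Finset.mem_univ s⟩)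
    have := Finset.card_le_card this
    rw [Finset.card_univ, Fintype.card_fin] at this
    omega
  have hinj : Function.Injective (fun x => σ x) := by
    have hcard : img.card = 3 := le_antisymm hcard2 (hr3 ▸ hcard1)
    have : Finset.card (Finset.univ : Finset (Fin 3)) = 3 := by simp
    have hinjon := Finset.injOn_of_card_image_eq (f := fun x => σ x)
      (s := Finset.univ) (by rw [← himg] at *; omega)
    intro a b hab
    exact hinjon (Finset.mem_coe.mpr (Finset.mem_univ a)) (Finset.mem_coe.mpr (Finset.mem_univ b)) hab
  refine ⟨hr3, hinj, ?_⟩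
  ext y
  constructor
  · rintro ⟨x, rfl⟩
    intro hxt
    exact huniv (Finset.mem_image.mpr ⟨x, Finset.mem_univ x, hxt⟩)
  · intro hy
    exact hsurj y hy

end BaseCase

section MainHelpers

lemma univClosed (Z : SSet.{0}) :
    ∀ {mm mm' : SimplexCategoryᵒᵖ} (φ : mm ⟶ mm') {σ : Z.obj mm},
      σ ∈ (fun _ => Set.univ : ∀ m : SimplexCategoryᵒᵖ, Set (Z.obj m)) mm →
      Z.map φ σ ∈ (fun _ => Set.univ : ∀ m : SimplexCategoryᵒᵖ, Set (Z.obj m)) mm' := by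
  intros
  trivial

def an1S (n i : ℕ) (h0 : 0 < i) (hn : i < n) : Set ((stdSimplex n) _⦋2⦌) :=
  {σ | IsDegen2 (stdSimplex n) σ ∨ σ = an1Tri n i h0 hn}

lemma genHorn_singleton_iff (r : ℕ) (a : Fin (r + 1)) (mm : SimplexCategoryᵒᵖ)
    (f : (stdSimplex r).obj mm) :
    f ∈ genHornP r {a} mm ↔ f ∈ hornP r a mm := by
  constructor
  · rintro ⟨s, hs, h⟩
    exact ⟨s, fun he => hs (Finset.mem_singleton.mpr he), h⟩
  · rintro ⟨s, hs, h⟩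
    exact ⟨s, fun he => hs (Finset.mem_singleton.mp he), h⟩

end MainHelpers

theorem genHorn_inclusion_scaledAnodyne' (r : ℕ) (hr : 3 ≤ r)
    (T : Set ((stdSimplex r) _⦋2⦌))
    (hT : ∀ σ : (stdSimplex r) _⦋2⦌, IsDegen2 (stdSimplex r) σ → σ ∈ T)
    (M : Finset (Fin (r + 1))) (hMne : M.Nonempty)
    (hMr : ∀ x ∈ M, (x : ℕ) < r)
    (s : Fin (r + 1))
    (hst : s < M.max' hMne) (hsM : s ∉ M)
    (hfill : ∀ i : Fin (r + 1), s < i → i ≤ M.max' hMne → i ∈ M)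
    (hcard : M.card + 2 ≤ r)
    (hnotthin : M.card + 2 = r →
      ∀ σ : (stdSimplex r) _⦋2⦌, Function.Injective σ →
        Set.range σ = {x | x ∉ M} → σ ∉ T)
    (hthin : ∀ (i : Fin (r + 1)) (hi : s ≤ i) (hit : i < M.max' hMne),
      tri i (M.max' hMne) ⟨(M.max' hMne : ℕ) + 1, Nat.succ_lt_succ (hMr _ (M.max'_mem hMne))⟩
        hit.le (Fin.le_def.mpr (Nat.le_succ _)) ∈ T) :
    ScaledAnodyne ((SScaled.mk (stdSimplex r) T hT).restrictIncl
      (genHornP r M) (genHornP_closed r M)) := by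
  intro P hP hgen
  suffices H : ∀ (c r : ℕ), 3 ≤ r → ∀ (T : Set ((stdSimplex r) _⦋2⦌))
      (hT : ∀ σ : (stdSimplex r) _⦋2⦌, IsDegen2 (stdSimplex r) σ → σ ∈ T)
      (M : Finset (Fin (r + 1))) (hMne : M.Nonempty), M.card = c →
      ∀ (hMr : ∀ x ∈ M, (x : ℕ) < r) (s : Fin (r + 1)),
      s < M.max' hMne → s ∉ M →
      (∀ i : Fin (r + 1), s < i → i ≤ M.max' hMne → i ∈ M) →
      M.card + 2 ≤ r →
      (M.card + 2 = r → ∀ σ : (stdSimplex r) _⦋2⦌, Function.Injective σ →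
        Set.range σ = {x | x ∉ M} → σ ∉ T) →
      (∀ (i : Fin (r + 1)) (hi : s ≤ i) (hit : i < M.max' hMne),
        tri i (M.max' hMne) ⟨(M.max' hMne : ℕ) + 1, by
            have := hMr _ (M.max'_mem hMne); omega⟩
          hit.le (Fin.le_def.mpr (Nat.le_succ _)) ∈ T) →
      P ((SScaled.mk (stdSimplex r) T hT).restrictIncl
        (genHornP r M) (genHornP_closed r M)) by
    exact H M.card r hr T hT M hMne rfl hMr s hst hsM hfill hcard hnotthin hthin
  intro c
  induction c using Nat.strong_induction_on with
  | _ c IH =>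
  intro r hr T hT M hMne hc hMr s hst hsM hfill hcard2 hnotthin hthin
  by_cases hc1 : M.card = 1
  -- ═══════════════ BASE CASE ═══════════════
  · obtain ⟨a, rfl⟩ := Finset.card_eq_one.mp hc1
    have hmax : ({a} : Finset (Fin (r + 1))).max' hMne = a := Finset.max'_singleton a
    have haM : a ∈ ({a} : Finset (Fin (r + 1))) := Finset.mem_singleton_self a
    have har : (a : ℕ) < r := hMr a haM
    have hsa : (s : ℕ) < (a : ℕ) := by
      have := Fin.lt_def.mp hst
      rwa [hmax] at this
    have h0 : 0 < (a : ℕ) := by omega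
    have hs1 : (s : ℕ) + 1 = (a : ℕ) := by
      by_contra hne
      have hlt : (s : ℕ) + 1 < (a : ℕ) := by omega
      have hi := hfill ⟨(s : ℕ) + 1, by omega⟩
        (Fin.lt_def.mpr (by simp)) (by rw [hmax]; exact Fin.le_def.mpr (by simp; omega))
      rw [Finset.mem_singleton] at hi
      have := congrArg Fin.val hi
      simp at this
      omega
    -- the special triangle is thin
    have htriT : an1Tri r (a : ℕ) h0 har ∈ T := by
      have h1 := hthin s (le_refl s) hst
      have heq : an1Tri r (a : ℕ) h0 har =
          tri s (({a} : Finset (Fin (r + 1))).max' hMne)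
            ⟨((({a} : Finset (Fin (r + 1))).max' hMne : Fin (r + 1)) : ℕ) + 1, by
              have := hMr _ (Finset.max'_mem _ hMne); omega⟩
            hst.le (Fin.le_def.mpr (Nat.le_succ _)) := by
        apply tri_congr
        · exact Fin.ext (by simp [an1Tri]; omega)
        · exact Fin.ext (by rw [hmax])
        · exact Fin.ext (by simp [hmax])
      rw [heq]
      exact h1
    have hpush := isPushout_oincl (Z := stdSimplex r)
      (S₀ := an1S r (a : ℕ) h0 har) (S₁ := an1S r (a : ℕ) h0 har) (S₂ := T) (S₃ := T)
      (hS₀ := fun _ h => Or.inl h) (hS₁ := fun _ h => Or.inl h) (hS₂ := hT) (hS₃ := hT)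
      (P₀ := hornP r a) (P₁ := fun _ => Set.univ) (P₂ := hornP r a) (P₃ := fun _ => Set.univ)
      (hP₀ := hornP_closed r a) (hP₁ := univClosed _) (hP₂ := hornP_closed r a)
      (hP₃ := univClosed _)
      (fun mm σ h => trivial) (fun σ _ h => h)
      (fun mm σ h => h) (fun σ _ hS => hS.elim (fun h => hT _ h) (fun h => by rw [h]; exact htriT))
      (fun mm σ h => trivial) (fun σ _ hS => hS.elim (fun h => hT _ h) (fun h => by rw [h]; exact htriT))
      (fun mm σ h => trivial) (fun σ _ h => h)
      (fun mm σ h1 h2 => h2)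
      (fun mm σ h => Or.inl trivial)
      (by
        intro σ _ hσT
        by_cases hh : σ ∈ hornP r a (Opposite.op (SimplexCategory.mk 2))
        · exact Or.inr ⟨hh, hσT⟩
        · exfalso
          obtain ⟨hr3, hinj, hrange⟩ := not_horn_2simplex hr a σ hh
          refine hnotthin (by rw [Finset.card_singleton]; omega) σ hinj ?_ hσT
          rw [hrange]
          ext y
          simp)
    have htop := hP.mem_of_arrowIso
      (oincl (Z := stdSimplex r) (S := an1S r (a : ℕ) h0 har) (S' := an1S r (a : ℕ) h0 har)
        (hS := fun _ h => Or.inl h) (hS' := fun _ h => Or.inl h)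
        (hP := hornP_closed r a) (hP' := univClosed _)
        (fun mm σ h => trivial) (fun σ _ h => h))
      (an1Map r (a : ℕ) h0 har)
      (Iso.refl _) (isoUniv (an1Target r (a : ℕ) h0 har))
      (by apply SHom.ext; apply NatTrans.ext; funext mm; ext σ; rfl)
      (hgen _ (AnodyneGenerator.an1 r (a : ℕ) h0 har))
    have hstep := hP.pushouts _ _ _ _ hpush htop
    refine hP.mem_of_arrowIso _ _
      (predIso (SScaled.mk (stdSimplex r) T hT) (fun mm f => genHorn_singleton_iff r a mm f))
      ((isoUniv (SScaled.mk (stdSimplex r) T hT)).symm) ?_ hstep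
    apply SHom.ext
    apply NatTrans.ext
    funext mm; ext σ
    rfl
  -- ═══════════════ INDUCTIVE STEP ═══════════════
  · have hcM : 2 ≤ M.card := by
      have := Finset.card_pos.mpr hMne
      omega
    obtain ⟨k, rfl⟩ : ∃ k, r = k + 1 := ⟨r - 1, by omega⟩
    have hm0M : M.min' hMne ∈ M := M.min'_mem hMne
    have htM : M.max' hMne ∈ M := M.max'_mem hMne
    have hm0t : M.min' hMne < M.max' hMne := M.min'_lt_max'_of_card (by omega)
    have htr : ((M.max' hMne : Fin (k + 2)) : ℕ) < k + 1 := hMr _ htM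
    have hstv : (s : ℕ) < ((M.max' hMne : Fin (k + 2)) : ℕ) := Fin.lt_def.mp hst
    have hsm0 : (M.min' hMne : Fin (k + 2)) ≠ s := fun h => hsM (h ▸ hm0M)
    have hcase : ((M.min' hMne : Fin (k + 2)) : ℕ) < (s : ℕ) ∨
        ((s : ℕ) < ((M.min' hMne : Fin (k + 2)) : ℕ) ∧
          ((M.min' hMne : Fin (k + 2)) : ℕ) = (s : ℕ) + 1) := by
      rcases lt_trichotomy ((M.min' hMne : Fin (k + 2)) : ℕ) (s : ℕ) with h | h | h
      · exact Or.inl h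
      · exact absurd (Fin.ext h) hsm0
      · refine Or.inr ⟨h, ?_⟩
        by_contra hne
        have hm0r : ((M.min' hMne : Fin (k + 2)) : ℕ) < k + 1 := hMr _ hm0M
        have hi := hfill ⟨(s : ℕ) + 1, by omega⟩
          (Fin.lt_def.mpr (by simp)) (Fin.le_def.mpr (by simp; omega))
        have := Fin.le_def.mp (M.min'_le _ hi)
        simp at this
        omega
    -- the auxiliary lower vertex for the erased set
    obtain ⟨s', hss', hs't, hs'M', hfill'⟩ :
        ∃ s' : Fin (k + 2), s ≤ s' ∧ s' < M.max' hMne ∧ s' ∉ M.erase (M.min' hMne) ∧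
          ∀ i : Fin (k + 2), s' < i → i ≤ M.max' hMne → i ∈ M.erase (M.min' hMne) := by
      rcases hcase with h | ⟨h1, h2⟩
      · refine ⟨s, le_refl s, hst, fun hmem => hsM (Finset.mem_of_mem_erase hmem), ?_⟩
        intro i hi1 hi2
        refine Finset.mem_erase.mpr ⟨?_, hfill i hi1 hi2⟩
        have := Fin.lt_def.mp hi1
        exact Fin.ne_of_val_ne (by omega)
      · refine ⟨M.min' hMne, Fin.le_def.mpr (by omega), hm0t,
          Finset.notMem_erase _ _, ?_⟩
        intro i hi1 hi2
        have hv := Fin.lt_def.mp hi1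
        refine Finset.mem_erase.mpr ⟨Fin.ne_of_val_ne (by omega), ?_⟩
        exact hfill i (Fin.lt_def.mpr (by omega)) hi2
    -- facts about the erased set
    have hM'ne : (M.erase (M.min' hMne)).Nonempty :=
      ⟨M.max' hMne, Finset.mem_erase.mpr ⟨hm0t.ne', htM⟩⟩
    have hM'max : (M.erase (M.min' hMne)).max' hM'ne = M.max' hMne := by
      apply le_antisymm
      · exact Finset.max'_le _ hM'ne _
          (fun y hy => Finset.le_max' M y (Finset.mem_of_mem_erase hy))
      · exact Finset.le_max' _ _ (Finset.mem_erase.mpr ⟨hm0t.ne', htM⟩)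
    have hM'card : (M.erase (M.min' hMne)).card = M.card - 1 :=
      Finset.card_erase_of_mem hm0M
    -- the r-level inductive hypothesis for the erased set
    have harr2 := IH (M.card - 1) (by omega) (k + 1) hr T hT (M.erase (M.min' hMne)) hM'ne
      (by rw [hM'card]) (fun x hx => hMr x (Finset.mem_of_mem_erase hx)) s'
      (by rw [hM'max]; exact hs't) hs'M'
      (by intro i h1 h2; rw [hM'max] at h2; exact hfill' i h1 h2)
      (by rw [hM'card]; omega)
      (fun h => absurd h (by rw [hM'card]; omega))
      (by
        intro i hi hit
        rw [hM'max] at hit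
        have h1 := hthin i (le_trans hss' hi) hit
        have heq : tri i ((M.erase (M.min' hMne)).max' hM'ne)
            ⟨(((M.erase (M.min' hMne)).max' hM'ne : Fin (k + 2)) : ℕ) + 1, by
              have := (fun x hx => hMr x (Finset.mem_of_mem_erase hx)) _
                (Finset.max'_mem _ hM'ne); omega⟩
            (lt_of_lt_of_eq hit hM'max.symm).le (Fin.le_def.mpr (Nat.le_succ _)) =
            tri i (M.max' hMne) ⟨((M.max' hMne : Fin (k + 2)) : ℕ) + 1, by
              have := hMr _ (M.max'_mem hMne); omega⟩
            hit.le (Fin.le_def.mpr (Nat.le_succ _)) := by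
          apply tri_congr rfl hM'max
          exact Fin.ext (by simp [hM'max])
        exact heq ▸ h1)
    -- ——— face-level setup ———
    have hk3 : 3 ≤ k := by omega
    have htne : (M.max' hMne) ≠ (M.min' hMne) := hm0t.ne'
    have hfet : fe (M.min' hMne) (rho (M.min' hMne) (M.max' hMne)) = M.max' hMne :=
      fe_rho _ _ htne
    have hfes : fe (M.min' hMne) (rho (M.min' hMne) s) = s := fe_rho _ _ (Ne.symm hsm0)
    have hMtne : (faceM (M.min' hMne) M).Nonempty :=
      ⟨rho _ (M.max' hMne), mem_faceM.mpr (by rw [hfet]; exact htM)⟩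
    have himg : faceM (M.min' hMne) M = (M.erase (M.min' hMne)).image (rho (M.min' hMne)) := by
      apply Finset.ext
      intro x
      rw [mem_faceM, Finset.mem_image]
      constructor
      · intro hx
        exact ⟨fe _ x, Finset.mem_erase.mpr ⟨fe_ne _ x, hx⟩, rho_fe _ x⟩
      · rintro ⟨y, hy, rfl⟩
        obtain ⟨hyne, hyM⟩ := Finset.mem_erase.mp hy
        rw [fe_rho _ y hyne]
        exact hyM
    have hMtcard : (faceM (M.min' hMne) M).card = M.card - 1 := by
      rw [himg, Finset.card_image_of_injOn, hM'card]
      intro y hy y' hy' hxy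
      obtain ⟨hyne, _⟩ := Finset.mem_erase.mp (Finset.mem_coe.mp hy)
      obtain ⟨hy'ne, _⟩ := Finset.mem_erase.mp (Finset.mem_coe.mp hy')
      rw [← fe_rho _ y hyne, ← fe_rho _ y' hy'ne, hxy]
    have hMtmax : (faceM (M.min' hMne) M).max' hMtne = rho (M.min' hMne) (M.max' hMne) := by
      apply le_antisymm
      · apply Finset.max'_le
        intro y hy
        have h1 : fe (M.min' hMne) y ≤ M.max' hMne := Finset.le_max' M _ (mem_faceM.mp hy)
        have h2 := (rho (M.min' hMne)).monotone h1
        rwa [rho_fe] at h2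
      · exact Finset.le_max' _ _ (mem_faceM.mpr (by rw [hfet]; exact htM))
    have hm0v := hMr _ hm0M
    -- ——— face-level inductive hypothesis ———
    have hface := IH (M.card - 1) (by omega) k hk3 (faceT k (M.min' hMne) T)
      (faceT_degen k _ T hT) (faceM (M.min' hMne) M) hMtne (by rw [hMtcard])
      (by
        intro x hx
        have h1 := hMr _ (mem_faceM.mp hx)
        rw [fe_val] at h1
        have h2 := Fin.lt_def.mp hm0t
        have h3 := htr
        split_ifs at h1 <;> omega)
      (rho (M.min' hMne) s)
      (by
        rw [hMtmax]
        by_contra hcon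
        push_neg at hcon
        have h1 := (fe (M.min' hMne)).monotone hcon
        rw [hfet, hfes] at h1
        exact absurd h1 (not_le.mpr hst))
      (fun h => hsM (hfes ▸ mem_faceM.mp h))
      (by
        intro i h1 h2
        rw [hMtmax] at h2
        apply mem_faceM.mpr
        apply hfill
        · have h3 := (fe_lt_iff (M.min' hMne) _ _).mpr h1
          rwa [hfes] at h3
        · have h3 := (fe (M.min' hMne)).monotone h2
          rwa [hfet] at h3)
      (by rw [hMtcard]; omega)
      (by
        intro hkeq σ hσinj hσrange hσT
        refine hnotthin (by rw [hMtcard] at hkeq; omega)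
          ((feMap k (M.min' hMne)).app _ σ) ((fe_injective _).comp hσinj) ?_ hσT
        ext y
        simp only [Set.mem_range, Set.mem_setOf_eq]
        constructor
        · rintro ⟨x, rfl⟩
          intro hmem
          have h1 : σ x ∈ Set.range ⇑σ := Set.mem_range_self x
          rw [hσrange] at h1
          exact h1 (mem_faceM.mpr hmem)
        · intro hy
          have hym : y ≠ M.min' hMne := fun h => hy (h ▸ hm0M)
          have h1 : rho (M.min' hMne) y ∈ Set.range ⇑σ := by
            rw [hσrange]
            intro hmem
            apply hy
            rw [← fe_rho _ y hym]
            exact mem_faceM.mp hmem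
          obtain ⟨x, hx⟩ := h1
          refine ⟨x, ?_⟩
          show fe _ (σ x) = y
          rw [hx, fe_rho _ y hym])
      (by
        intro i hi hit
        show (feMap k (M.min' hMne)).app _ _ ∈ T
        rw [feMap_tri]
        have e2 : fe (M.min' hMne) ((faceM (M.min' hMne) M).max' hMtne) = M.max' hMne := by
          rw [hMtmax, hfet]
        have hsfei : s ≤ fe (M.min' hMne) i := by
          have h3 := (fe (M.min' hMne)).monotone hi
          rwa [hfes] at h3
        have hfeit : fe (M.min' hMne) i < M.max' hMne := by
          have h3 := (fe_lt_iff (M.min' hMne) _ _).mpr hit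
          rwa [e2] at h3
        have h1 := hthin (fe (M.min' hMne) i) hsfei hfeit
        have heq : tri (fe (M.min' hMne) i) (M.max' hMne)
            ⟨((M.max' hMne : Fin (k + 2)) : ℕ) + 1, by
              have := hMr _ (M.max'_mem hMne); omega⟩
            hfeit.le (Fin.le_def.mpr (Nat.le_succ _)) =
            tri (fe (M.min' hMne) i) (fe (M.min' hMne) ((faceM (M.min' hMne) M).max' hMtne))
              (fe (M.min' hMne) ⟨((faceM (M.min' hMne) M).max' hMtne : ℕ) + 1, by
                have h4 := congrArg Fin.val hMtmax
                rw [rho_val] at h4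
                have h5 := Fin.lt_def.mp hm0t
                split_ifs at h4 <;> omega⟩)
              ((fe (M.min' hMne)).monotone hit.le)
              ((fe (M.min' hMne)).monotone (Fin.le_def.mpr (Nat.le_succ _))) := by
          apply tri_congr rfl e2.symm
          apply Fin.ext
          simp only [fe_val]
          have h4 := congrArg Fin.val hMtmax
          rw [rho_val] at h4
          have h5 := Fin.lt_def.mp hm0t
          split_ifs at h4 ⊢ <;> omega
        exact heq ▸ h1)
    have htop := face_P_transfer P hP (m := M.min' hMne) (T := T) (hT := hT) M hm0M hface
    -- ——— the pushout adjoining the face ———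
    have hpush := isPushout_oincl (Z := stdSimplex (k + 1))
      (S₀ := T) (S₁ := T) (S₂ := T) (S₃ := T)
      (hS₀ := hT) (hS₁ := hT) (hS₂ := hT) (hS₃ := hT)
      (P₀ := hornCapIm k (M.min' hMne) M) (P₁ := ImP k (M.min' hMne))
      (P₂ := genHornP (k + 1) M) (P₃ := genHornP (k + 1) (M.erase (M.min' hMne)))
      (hP₀ := hornCapIm_closed k _ M) (hP₁ := ImP_closed k _)
      (hP₂ := genHornP_closed _ M) (hP₃ := genHornP_closed _ _)
      (fun mm σ h => h.2) (fun σ _ h => h)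
      (fun mm σ h => h.1) (fun σ _ h => h)
      (by
        intro mm σ h
        exact ⟨M.min' hMne, Finset.notMem_erase _ _, h⟩)
      (fun σ _ h => h)
      (by
        rintro mm σ ⟨s₀, hs₀, h⟩
        exact ⟨s₀, fun hmem => hs₀ (Finset.mem_of_mem_erase hmem), h⟩)
      (fun σ _ h => h)
      (fun mm σ h1 h2 => ⟨h2, h1⟩)
      (by
        rintro mm σ ⟨s₀, hs₀, h⟩
        by_cases he : s₀ = M.min' hMne
        · exact Or.inl (fun x => he ▸ h x)
        · exact Or.inr ⟨s₀, fun hmem => hs₀ (Finset.mem_erase.mpr ⟨he, hmem⟩), h⟩)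
      (by
        rintro σ ⟨s₀, hs₀, h⟩ hσT
        by_cases he : s₀ = M.min' hMne
        · exact Or.inl ⟨fun x => he ▸ h x, hσT⟩
        · exact Or.inr ⟨⟨s₀, fun hmem => hs₀ (Finset.mem_erase.mpr ⟨he, hmem⟩), h⟩, hσT⟩)
    have hstep := hP.pushouts _ _ _ _ hpush htop
    have hcomp := hP.comp_mem _ _ hstep harr2
    refine hP.mem_of_arrowIso _ _ (Iso.refl _) (Iso.refl _) ?_ hcomp
    apply SHom.ext
    apply NatTrans.ext
    funext mm; ext σ
    rfl

/-- Lemma 3.7 / Garcia-Stern Lemma 1.18.  Let `r ≥ 3`, let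
`Δʳ_† = (Δʳ, T)` be a scaled simplicial set, and let `M` be a nonempty subset of
`{0, …, r−1}` with largest element `t`.  Assume there is `s < t` with `s ∉ M` and
`i ∈ M` for all `s < i ≤ t`; that `|M| ≤ r − 2`; that if `|M| = r − 2` the triangle
`Δ^{[r]∖M}` is not thin; and that the triangles `Δ^{i,t,t+1}` are thin for all
`s ≤ i < t`.  Then the inclusion `Λʳ_M → Δʳ_†` (with the induced scaling) is
scaled anodyne. -/
theorem genHorn_inclusion_scaledAnodyne (r : ℕ) (hr : 3 ≤ r)
    (T : Set ((stdSimplex r) _⦋2⦌))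
    (hT : ∀ σ : (stdSimplex r) _⦋2⦌, IsDegen2 (stdSimplex r) σ → σ ∈ T)
    (M : Finset (Fin (r + 1))) (hMne : M.Nonempty)
    (hMr : ∀ x ∈ M, (x : ℕ) < r)
    (s : Fin (r + 1))
    -- (i) `s < t`, `s ∉ M`, and `i ∈ M` for all `s < i ≤ t`:
    (hst : s < M.max' hMne) (hsM : s ∉ M)
    (hfill : ∀ i : Fin (r + 1), s < i → i ≤ M.max' hMne → i ∈ M)
    -- (ii) `|M| ≤ r − 2`, and the triangle `Δ^{[r]∖M}` is not thin if `|M| = r − 2`: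
    (hcard : M.card + 2 ≤ r)
    (hnotthin : M.card + 2 = r →
      ∀ σ : (stdSimplex r) _⦋2⦌, Function.Injective σ →
        Set.range σ = {x | x ∉ M} → σ ∉ T)
    -- (iii) the triangles `Δ^{i,t,t+1}` are thin for all `s ≤ i < t`:
    (hthin : ∀ (i : Fin (r + 1)) (hi : s ≤ i) (hit : i < M.max' hMne),
      tri i (M.max' hMne) ⟨(M.max' hMne : ℕ) + 1, by
          have := hMr _ (M.max'_mem hMne); omega⟩
        hit.le (Fin.le_def.mpr (Nat.le_succ _)) ∈ T) :
    ScaledAnodyne ((SScaled.mk (stdSimplex r) T hT).restrictIncl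
      (genHornP r M) (genHornP_closed r M)) :=
  genHorn_inclusion_scaledAnodyne' r hr T hT M hMne hMr s hst hsM hfill hcard hnotthin hthin

end ScaledSSet
end
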